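/- arXiv:1106.3037 — 7 statements merged into one kernel-verified Lean document; each statement's English description precedes it below -/
import Mathlib

section
/- Let i and j be two distinct trapezoids in a trapezoid diagram, where trapezoid i is the convex hull in ℝ² of the four points (a i, 1), (b i, 1), (c i, 0), (d i, 0) with a i ≤ b i and c i ≤ d i, and the corner coordinates satisfy a i, b i, a j, b j pairwise distinct and c i, d i, c j, d j pairwise distinct. Then the trapezoids i and j are disjoint if and only if either (b i < a j and d i < c j) or (b j < a i and d j < c i). -/
lemma mem_trap (a b c d x t : ℝ)
    (ht0 : 0 ≤ t) (ht1 : t ≤ 1)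
    (hL : (1-t)*c + t*a ≤ x) (hR : x ≤ (1-t)*d + t*b) :
    (x, t) ∈ convexHull ℝ ({(a,1),(b,1),(c,0),(d,0)} : Set (ℝ × ℝ)) := by
  have hP : ((1-t)*c + t*a, t) ∈ convexHull ℝ ({(a,1),(b,1),(c,0),(d,0)} : Set (ℝ × ℝ)) := by
    apply segment_subset_convexHull (by simp : ((c:ℝ),(0:ℝ)) ∈ _) (by simp : ((a:ℝ),(1:ℝ)) ∈ _)
    refine ⟨1-t, t, by linarith, ht0, by ring, ?_⟩
    simp [Prod.ext_iff, Prod.smul_def]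
  have hQ : ((1-t)*d + t*b, t) ∈ convexHull ℝ ({(a,1),(b,1),(c,0),(d,0)} : Set (ℝ × ℝ)) := by
    apply segment_subset_convexHull (by simp : ((d:ℝ),(0:ℝ)) ∈ _) (by simp : ((b:ℝ),(1:ℝ)) ∈ _)
    refine ⟨1-t, t, by linarith, ht0, by ring, ?_⟩
    simp [Prod.ext_iff, Prod.smul_def]
  have hx : x ∈ segment ℝ ((1-t)*c + t*a) ((1-t)*d + t*b) := by
    rw [segment_eq_Icc (le_trans hL hR)]; exact ⟨hL, hR⟩
  obtain ⟨u, v, hu, hv, huv, hxeq⟩ := hx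
  apply (convex_convexHull ℝ _).segment_subset hP hQ
  refine ⟨u, v, hu, hv, huv, ?_⟩
  simp [Prod.ext_iff, Prod.smul_def]
  constructor
  · exact hxeq
  · have : u*t + v*t = (u+v)*t := by ring
    rw [this, huv, one_mul]

lemma trap_halfplane_lt (a b c d α β : ℝ)
    (h1 : a + α * 1 < β) (h2 : b + α * 1 < β) (h3 : c < β) (h4 : d < β) :
    convexHull ℝ ({(a,1),(b,1),(c,0),(d,0)} : Set (ℝ × ℝ)) ⊆ {p : ℝ × ℝ | p.1 + α * p.2 < β} := by
  apply convexHull_min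
  · intro p hp
    simp only [Set.mem_insert_iff, Set.mem_singleton_iff] at hp
    rcases hp with h|h|h|h <;> subst h <;> simp only [Set.mem_setOf_eq] <;> simpa using by linarith
  · exact convex_halfSpace_lt ⟨fun p q => by simp; ring, fun s p => by simp; ring⟩ β

lemma trap_halfplane_gt (a b c d α β : ℝ)
    (h1 : β < a + α * 1) (h2 : β < b + α * 1) (h3 : β < c) (h4 : β < d) :
    convexHull ℝ ({(a,1),(b,1),(c,0),(d,0)} : Set (ℝ × ℝ)) ⊆ {p : ℝ × ℝ | β < p.1 + α * p.2} := by
  apply convexHull_min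
  · intro p hp
    simp only [Set.mem_insert_iff, Set.mem_singleton_iff] at hp
    rcases hp with h|h|h|h <;> subst h <;> simp only [Set.mem_setOf_eq] <;> simpa using by linarith
  · exact convex_halfSpace_gt ⟨fun p q => by simp; ring, fun s p => by simp; ring⟩ β

lemma sep_disjoint (ai bi ci di aj bj cj dj : ℝ)
    (hi_up : ai ≤ bi) (hi_lo : ci ≤ di) (hj_up : aj ≤ bj) (hj_lo : cj ≤ dj)
    (htop : bi < aj) (hbot : di < cj) :
    Disjoint
      (convexHull ℝ ({(ai, 1), (bi, 1), (ci, 0), (di, 0)} : Set (ℝ × ℝ)))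
      (convexHull ℝ ({(aj, 1), (bj, 1), (cj, 0), (dj, 0)} : Set (ℝ × ℝ))) := by
  have hi := trap_halfplane_lt ai bi ci di ((di+cj)/2 - (bi+aj)/2) ((di+cj)/2)
    (by linarith) (by linarith) (by linarith) (by linarith)
  have hj := trap_halfplane_gt aj bj cj dj ((di+cj)/2 - (bi+aj)/2) ((di+cj)/2)
    (by linarith) (by linarith) (by linarith) (by linarith)
  rw [Set.disjoint_left]
  intro p hpi hpj
  have h1 := hi hpi
  have h2 := hj hpj
  simp only [Set.mem_setOf_eq] at h1 h2
  linarith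

/-- Crossing trapezoids intersect. -/
lemma cross_not_disjoint (ai bi ci di aj bj cj dj : ℝ)
    (hi_up : ai ≤ bi) (hi_lo : ci ≤ di) (hj_up : aj ≤ bj) (hj_lo : cj ≤ dj)
    (htop : bi < aj) (hbot : cj < di) :
    ¬ Disjoint
      (convexHull ℝ ({(ai, 1), (bi, 1), (ci, 0), (di, 0)} : Set (ℝ × ℝ)))
      (convexHull ℝ ({(aj, 1), (bj, 1), (cj, 0), (dj, 0)} : Set (ℝ × ℝ))) := by
  rw [Set.not_disjoint_iff]
  set p : ℝ := di - cj with hp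
  set q : ℝ := aj - bi with hq
  have hp0 : 0 < p := by simp [hp]; linarith
  have hq0 : 0 < q := by simp [hq]; linarith
  set t : ℝ := p / (p + q) with ht
  have hpq : 0 < p + q := by linarith
  have ht0 : 0 < t := div_pos hp0 hpq
  have ht1 : t < 1 := by rw [ht, div_lt_one hpq]; linarith
  set x : ℝ := (1-t)*di + t*bi with hx
  have key : (1-t) * p = t * q := by
    rw [ht]; field_simp; ring
  refine ⟨(x, t), ?_, ?_⟩
  · exact mem_trap ai bi ci di x t ht0.le ht1.le
      (by nlinarith [sub_nonneg.2 hi_lo, sub_nonneg.2 hi_up]) le_rfl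
  · apply mem_trap aj bj cj dj x t ht0.le ht1.le
    · rw [hx]; nlinarith [key]
    · nlinarith [key, sub_nonneg.2 hj_lo, sub_nonneg.2 hj_up, ht0.le, sub_nonneg.2 ht1.le]

/-- Two trapezoids in a trapezoid diagram (with corners on the lines `y = 1` and `y = 0`,
and pairwise distinct corner coordinates on each line) are disjoint iff one lies entirely
to the left of the other. -/
theorem trapezoids_disjoint_iff
    (ai bi ci di aj bj cj dj : ℝ)
    (hi_up : ai ≤ bi) (hi_lo : ci ≤ di)
    (hj_up : aj ≤ bj) (hj_lo : cj ≤ dj)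
    (h_up_distinct : ([ai, bi, aj, bj] : List ℝ).Pairwise (· ≠ ·))
    (h_lo_distinct : ([ci, di, cj, dj] : List ℝ).Pairwise (· ≠ ·)) :
    Disjoint
      (convexHull ℝ ({(ai, 1), (bi, 1), (ci, 0), (di, 0)} : Set (ℝ × ℝ)))
      (convexHull ℝ ({(aj, 1), (bj, 1), (cj, 0), (dj, 0)} : Set (ℝ × ℝ)))
      ↔ ((bi < aj ∧ di < cj) ∨ (bj < ai ∧ dj < ci)) := by
  simp only [List.pairwise_cons, List.mem_cons, List.not_mem_nil, or_false,
    List.mem_singleton] at h_up_distinct h_lo_distinct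
  obtain ⟨hu1, hu2, hu3⟩ := h_up_distinct
  obtain ⟨hl1, hl2, hl3⟩ := h_lo_distinct
  have hbiaj : bi ≠ aj := hu2 aj (Or.inl rfl)
  have hbjai : ai ≠ bj := hu1 bj (Or.inr (Or.inr rfl))
  have hdicj : di ≠ cj := hl2 cj (Or.inl rfl)
  have hdjci : ci ≠ dj := hl1 dj (Or.inr (Or.inr rfl))
  constructor
  · intro hdisj
    by_contra hsep
    push_neg at hsep
    obtain ⟨hs1, hs2⟩ := hsep
    rcases lt_trichotomy bi aj with h|h|h
    · have hcjdi : cj < di := (hs1 h).lt_of_ne hdicj.symm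
      exact cross_not_disjoint ai bi ci di aj bj cj dj hi_up hi_lo hj_up hj_lo h hcjdi hdisj
    · exact hbiaj h
    · rcases lt_trichotomy bj ai with h'|h'|h'
      · have hcidj : ci < dj := (hs2 h').lt_of_ne hdjci
        exact cross_not_disjoint aj bj cj dj ai bi ci di hj_up hj_lo hi_up hi_lo h' hcidj hdisj.symm
      · exact hbjai h'.symm
      · -- top intervals overlap: aj < bi and ai < bj; common point (max ai aj, 1)
        rw [Set.disjoint_left] at hdisj
        refine hdisj (a := (max ai aj, 1)) ?_ ?_
        · exact mem_trap ai bi ci di _ 1 zero_le_one le_rfl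
            (by simp)
            (by simp; exact ⟨hi_up, h.le⟩)
        · exact mem_trap aj bj cj dj _ 1 zero_le_one le_rfl
            (by simp)
            (by simp; exact ⟨h'.le, hj_up⟩)
  · rintro (⟨htop, hbot⟩|⟨htop, hbot⟩)
    · exact sep_disjoint ai bi ci di aj bj cj dj hi_up hi_lo hj_up hj_lo htop hbot
    · exact (sep_disjoint aj bj cj dj ai bi ci di hj_up hj_lo hi_up hi_lo htop hbot).symm
end

section
/- Let G be a finite simple graph with a trapezoid representation a, b, c, d, and let x, y be real numbers. Call a vertex i left of the cut line (x, y) if b i < x and d i < y, and right of the cut line if x < a i and y < c i. Let S be the set of vertices that are neither left nor right of the cut line. Then for every vertex u that is left and every vertex v that is right of the cut line, u and v are not reachable from one another in the subgraph of G induced on the complement of S; in particular, if some vertex is left and some vertex is right of the cut line, then deleting S disconnects G. -/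
/-- A trapezoid representation of a finite simple graph `G`: functions `a b c d : V → ℝ`
with `a i ≤ b i`, `c i ≤ d i`, all upper corner values pairwise distinct, all lower corner
values pairwise distinct, and two distinct vertices adjacent iff neither trapezoid lies
entirely to the left of the other. -/
def IsTrapRep {V : Type*} (G : SimpleGraph V) (a b c d : V → ℝ) : Prop :=
  (∀ i, a i ≤ b i) ∧ (∀ i, c i ≤ d i) ∧
  Function.Injective (fun p : V × Bool => if p.2 then b p.1 else a p.1) ∧
  Function.Injective (fun p : V × Bool => if p.2 then d p.1 else c p.1) ∧
  ∀ i j : V, i ≠ j →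
    (G.Adj i j ↔ ¬((b i < a j ∧ d i < c j) ∨ (b j < a i ∧ d j < c i)))

/-- Deleting the set `S` of vertices crossing the cut line `(x, y)` separates every vertex
lying entirely left of the cut line from every vertex lying entirely right of it;
in particular, if both sides are nonempty, deleting `S` disconnects `G`. -/
theorem cutLine_disconnects {V : Type*} [Fintype V] (G : SimpleGraph V)
    (a b c d : V → ℝ) (hrep : IsTrapRep G a b c d) (x y : ℝ) :
    (∀ (u v : V) (hu : b u < x ∧ d u < y) (hv : x < a v ∧ y < c v),
      ¬ (G.induce ({i : V | ¬(b i < x ∧ d i < y) ∧ ¬(x < a i ∧ y < c i)} : Set V)ᶜ).Reachable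
          ⟨u, fun h => h.1 hu⟩ ⟨v, fun h => h.2 hv⟩) ∧
    ((∃ u, b u < x ∧ d u < y) → (∃ v, x < a v ∧ y < c v) →
      ¬ (G.induce ({i : V | ¬(b i < x ∧ d i < y) ∧ ¬(x < a i ∧ y < c i)} : Set V)ᶜ).Connected) := by
  obtain ⟨hab, hcd, _, _, hadj⟩ := hrep
  set T := ({i : V | ¬(b i < x ∧ d i < y) ∧ ¬(x < a i ∧ y < c i)} : Set V)ᶜ with hT
  -- invariant: along any edge of induce T, "left" is preserved
  have key : ∀ (p q : T) (w : (G.induce T).Walk p q), (b p.1 < x ∧ d p.1 < y) →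
      (b q.1 < x ∧ d q.1 < y) := by
    intro p q w
    induction w with
    | nil => exact id
    | @cons i j k h w ih =>
      intro hp
      apply ih
      have hjT : j.1 ∈ T := j.2
      have hj : (b j.1 < x ∧ d j.1 < y) ∨ (x < a j.1 ∧ y < c j.1) := by
        simp only [hT, Set.mem_compl_iff, Set.mem_setOf_eq, not_and_or, not_not] at hjT
        tauto
      rcases hj with hj | hj
      · exact hj
      · exfalso
        have hne : i.1 ≠ j.1 := fun e => (G.induce T).irrefl (by
          have : i = j := Subtype.ext e
          rwa [this] at h)
        have hAdj : G.Adj i.1 j.1 := h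
        have := (hadj i.1 j.1 hne).mp hAdj
        exact this (Or.inl ⟨hp.1.trans hj.1, hp.2.trans hj.2⟩)
  constructor
  · intro u v hu hv hr
    have := key _ _ hr.some hu
    have : b v < x := this.1
    linarith [hab v, hv.1]
  · rintro ⟨u, hu⟩ ⟨v, hv⟩ hconn
    have hr := hconn ⟨u, fun h => h.1 hu⟩ ⟨v, fun h => h.2 hv⟩
    have := key _ _ hr.some hu
    have : b v < x := this.1
    linarith [hab v, hv.1]
end

section
/- Let G be a connected finite simple graph that is not complete and has a trapezoid representation a, b, c, d. For real numbers x, y, call a vertex i left of the cut line (x, y) if b i < x and d i < y, right if x < a i and y < c i, and crossing otherwise; let N(x, y) be the number of crossing vertices. Then the vertex connectivity κ(G), i.e., the minimum cardinality of a set of vertices whose deletion disconnects G, equals the minimum of N(x, y) over all pairs (x, y) for which at least one vertex is left and at least one vertex is right of the cut line (x, y). -/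
/-!
A trapezoid entirely left of a cut line and one entirely right of it are disjoint, so deleting the
trapezoids that cross the line leaves the two sides without an edge between them.

Conversely, let `S` be a vertex cut and `u` the vertex of `G - S` with the smallest `b`.
Nonadjacent trapezoids are disjoint, hence one lies left of the other; following walks from `u`,
every trapezoid outside the component `C` of `u` lies right of every trapezoid in `C`. A cut line
squeezed between `C` and the rest is therefore crossed only by vertices of `S`.
-/

section

variable {V : Type*}

theorem SimpleGraph.Reachable.of_adj_closed {H : SimpleGraph V} {P : V → Prop}
    (hP : ∀ ⦃x y⦄, H.Adj x y → P x → P y) {u v : V} (h : H.Reachable u v) (hu : P u) :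
    P v := by
  obtain ⟨p⟩ := h
  induction p with
  | nil => exact hu
  | cons hadj _ ih => exact ih (hP hadj hu)

def crossingSet (a b c d : V → ℝ) (x y : ℝ) : Set V :=
  {i | ¬(b i < x ∧ d i < y) ∧ ¬(x < a i ∧ y < c i)}

namespace IsTrapRep

variable {G : SimpleGraph V} {a b c d : V → ℝ}

theorem not_adj_of_lt (hrep : IsTrapRep G a b c d) {i j : V} (h : b i < a j ∧ d i < c j) :
    ¬ G.Adj i j :=
  fun hadj => (hrep.2.2.2.2 i j hadj.ne).1 hadj (Or.inl h)

theorem lt_or_lt_of_not_adj (hrep : IsTrapRep G a b c d) {i j : V} (hij : i ≠ j)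
    (h : ¬ G.Adj i j) : (b i < a j ∧ d i < c j) ∨ (b j < a i ∧ d j < c i) :=
  not_not.1 fun h' => h ((hrep.2.2.2.2 i j hij).2 h')

theorem exists_cutLine (hrep : IsTrapRep G a b c d) (hG : G ≠ ⊤) :
    ∃ x y : ℝ, (∃ i, b i < x ∧ d i < y) ∧ (∃ j, x < a j ∧ y < c j) := by
  obtain ⟨u, v, huv, hnadj⟩ := SimpleGraph.ne_top_iff_exists_not_adj.1 hG
  obtain ⟨i, j, hbx, hdy⟩ : ∃ i j, b i < a j ∧ d i < c j := by
    rcases hrep.lt_or_lt_of_not_adj huv hnadj with h | h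
    exacts [⟨u, v, h⟩, ⟨v, u, h⟩]
  obtain ⟨x, hx⟩ := exists_between hbx
  obtain ⟨y, hy⟩ := exists_between hdy
  exact ⟨x, y, ⟨i, hx.1, hy.1⟩, ⟨j, hx.2, hy.2⟩⟩

theorem not_connected_induce_compl_crossingSet (hrep : IsTrapRep G a b c d) {x y : ℝ}
    (hl : ∃ i, b i < x ∧ d i < y) (hr : ∃ j, x < a j ∧ y < c j) :
    ¬ (G.induce (crossingSet a b c d x y)ᶜ).Connected := by
  obtain ⟨i, hi⟩ := hl
  obtain ⟨j, hj⟩ := hr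
  have side (k : ↥(crossingSet a b c d x y)ᶜ) :
      (b k < x ∧ d k < y) ∨ (x < a k ∧ y < c k) := by
    have hk := k.2
    simp only [crossingSet, Set.mem_compl_iff, Set.mem_ofPred_eq] at hk
    tauto
  intro hconn
  have hj_left : b j < x ∧ d j < y := by
    refine (hconn.preconnected ⟨i, fun h => h.1 hi⟩ ⟨j, fun h => h.2 hj⟩).of_adj_closed
      (P := fun k : ↥(crossingSet a b c d x y)ᶜ => b k < x ∧ d k < y)
      (fun k l hkl hk => ?_) hi
    exact (side l).resolve_right fun hl => hrep.not_adj_of_lt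
      ⟨hk.1.trans hl.1, hk.2.trans hl.2⟩ hkl
  linarith [hrep.1 j, hj_left.1, hj.1]

theorem lt_of_reachable_of_not_reachable (hrep : IsTrapRep G a b c d) {s : Set V} {u z w : s}
    (hu : ∀ k : s, b u ≤ b k) (hz : (G.induce s).Reachable u z)
    (hw : ¬ (G.induce s).Reachable u w) : b z < a w ∧ d z < c w := by
  have comparable (k : s) (hk : (G.induce s).Reachable u k) :
      (b k < a w ∧ d k < c w) ∨ (b w < a k ∧ d w < c k) :=
    hrep.lt_or_lt_of_not_adj (fun h => hw (Subtype.ext h ▸ hk))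
      (fun h => hw (hk.trans (SimpleGraph.Adj.reachable h)))
  refine hz.of_adj_closed
    (P := fun k => (G.induce s).Reachable u k → b k < a w ∧ d k < c w) ?_ ?_ hz
  · intro k l hkl hk hl
    have hkw := hk (hl.trans hkl.symm.reachable)
    refine (comparable l hl).resolve_right fun hwl => hrep.not_adj_of_lt (i := k) (j := l) ?_ hkl
    constructor <;> linarith [hrep.1 w, hrep.2.1 w]
  · intro _
    refine (comparable u .rfl).resolve_right fun hwu => ?_
    linarith [hrep.1 u, hu w]

theorem exists_cutLine_crossingSet_subset [Finite V] (hrep : IsTrapRep G a b c d)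
    {S : Set V} (hS : ¬ (G.induce Sᶜ).Connected) (hne : Sᶜ.Nonempty) :
    ∃ x y : ℝ, (∃ i, b i < x ∧ d i < y) ∧ (∃ j, x < a j ∧ y < c j) ∧
      crossingSet a b c d x y ⊆ S := by
  have : Nonempty ↥Sᶜ := hne.to_subtype
  obtain ⟨u, hu⟩ := Finite.exists_min (fun k : ↥Sᶜ => b k)
  obtain ⟨v, hv⟩ : ∃ v, ¬ (G.induce Sᶜ).Reachable u v := by
    by_contra! h
    exact hS ⟨fun p q => (h p).symm.trans (h q)⟩
  set C := {z | (G.induce Sᶜ).Reachable u z}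
  have hlt (z : ↥Sᶜ) (hz : z ∈ C) (w : ↥Sᶜ) (hw : w ∉ C) :=
    hrep.lt_of_reachable_of_not_reachable hu hz hw
  obtain ⟨x, hxC, hxR⟩ := (C.toFinite.image fun z : ↥Sᶜ => b z).exists_between'
    (Cᶜ.toFinite.image fun w : ↥Sᶜ => a w) (by
      rintro _ ⟨z, hz, rfl⟩ _ ⟨w, hw, rfl⟩
      exact (hlt z hz w hw).1)
  obtain ⟨y, hyC, hyR⟩ := (C.toFinite.image fun z : ↥Sᶜ => d z).exists_between'
    (Cᶜ.toFinite.image fun w : ↥Sᶜ => c w) (by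
      rintro _ ⟨z, hz, rfl⟩ _ ⟨w, hw, rfl⟩
      exact (hlt z hz w hw).2)
  simp only [Set.forall_mem_image] at hxC hxR hyC hyR
  refine ⟨x, y, ⟨u, hxC .rfl, hyC .rfl⟩, ⟨v, hxR hv, hyR hv⟩, fun i hi => ?_⟩
  by_contra hiS
  by_cases hr : (⟨i, hiS⟩ : ↥Sᶜ) ∈ C
  · exact hi.1 ⟨hxC hr, hyC hr⟩
  · exact hi.2 ⟨hxR hr, hyR hr⟩

theorem exists_cutLine_ncard_crossingSet_le [Finite V] (hrep : IsTrapRep G a b c d)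
    (hG : G ≠ ⊤) {S : Set V} (hS : ¬ (G.induce Sᶜ).Connected) :
    ∃ x y : ℝ, (∃ i, b i < x ∧ d i < y) ∧ (∃ j, x < a j ∧ y < c j) ∧
      (crossingSet a b c d x y).ncard ≤ S.ncard := by
  rcases Sᶜ.eq_empty_or_nonempty with hempty | hne
  · obtain ⟨x, y, hl, hr⟩ := hrep.exists_cutLine hG
    rw [Set.compl_empty_iff.1 hempty]
    exact ⟨x, y, hl, hr, Set.ncard_le_ncard (Set.subset_univ _)⟩
  · obtain ⟨x, y, hl, hr, hsub⟩ := hrep.exists_cutLine_crossingSet_subset hS hne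
    exact ⟨x, y, hl, hr, Set.ncard_le_ncard hsub⟩

end IsTrapRep

end

theorem vertexConnectivity_eq_min_cutLine_general {V : Type*} [Fintype V] (G : SimpleGraph V)
    (a b c d : V → ℝ) (hrep : IsTrapRep G a b c d)
    (hnotcomplete : G ≠ ⊤) :
    sInf {n : ℕ | ∃ S : Set V, ¬ (G.induce Sᶜ).Connected ∧ n = S.ncard} =
    sInf {n : ℕ | ∃ x y : ℝ,
      (∃ i, b i < x ∧ d i < y) ∧ (∃ j, x < a j ∧ y < c j) ∧
      n = {i : V | ¬(b i < x ∧ d i < y) ∧ ¬(x < a i ∧ y < c i)}.ncard} := by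
  obtain ⟨x, y, hl, hr⟩ := hrep.exists_cutLine hnotcomplete
  refine le_antisymm (csInf_le_csInf (OrderBot.bddBelow _) ⟨_, x, y, hl, hr, rfl⟩ ?_)
    (le_csInf ?_ ?_)
  · rintro _ ⟨x, y, hl, hr, rfl⟩
    exact ⟨_, hrep.not_connected_induce_compl_crossingSet hl hr, rfl⟩
  · exact ⟨_, _, hrep.not_connected_induce_compl_crossingSet hl hr, rfl⟩
  · rintro _ ⟨S, hS, rfl⟩
    obtain ⟨x, y, hl, hr, hle⟩ := hrep.exists_cutLine_ncard_crossingSet_le hnotcomplete hS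
    refine le_trans (Nat.sInf_le ?_) hle
    exact ⟨x, y, hl, hr, rfl⟩

/-- For a connected non-complete trapezoid graph `G`, the vertex connectivity
(the minimum cardinality of a set of vertices whose deletion disconnects `G`)
equals the minimum number `N (x, y)` of trapezoids crossing a cut line `(x, y)`,
taken over all cut lines having at least one trapezoid entirely to the left
and at least one entirely to the right. -/
theorem vertexConnectivity_eq_min_cutLine {V : Type*} [Fintype V] (G : SimpleGraph V)
    (a b c d : V → ℝ) (hrep : IsTrapRep G a b c d)
    (hconn : G.Connected) (hnotcomplete : G ≠ ⊤) :
    sInf {n : ℕ | ∃ S : Set V, ¬ (G.induce Sᶜ).Connected ∧ n = S.ncard} =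
    sInf {n : ℕ | ∃ x y : ℝ,
      (∃ i, b i < x ∧ d i < y) ∧ (∃ j, x < a j ∧ y < c j) ∧
      n = {i : V | ¬(b i < x ∧ d i < y) ∧ ¬(x < a i ∧ y < c i)}.ncard} :=
  vertexConnectivity_eq_min_cutLine_general G a b c d hrep hnotcomplete
end

section
/- Let G be a connected finite simple graph that is not complete, with a trapezoid representation a, b, c, d, and let S be a vertex cut of G of minimum cardinality. Then there exist real numbers x and y such that at least one vertex i of G satisfies b i < x and d i < y (lies entirely left of the cut line), at least one vertex j satisfies x < a j and y < c j (lies entirely right of the cut line), and every vertex that is neither entirely left nor entirely right of the cut line belongs to S. -/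
private lemma exists_sep {ι : Type*} {L R : Set ι} (hLf : L.Finite) (hRf : R.Finite)
    (hL : L.Nonempty) (hR : R.Nonempty) {f g : ι → ℝ}
    (h : ∀ i ∈ L, ∀ j ∈ R, f i < g j) :
    ∃ x : ℝ, (∀ i ∈ L, f i < x) ∧ (∀ j ∈ R, x < g j) := by
  obtain ⟨i₀, hi₀, hmax⟩ := Set.exists_max_image L f hLf hL
  obtain ⟨j₀, hj₀, hmin⟩ := Set.exists_min_image R g hRf hR
  have hkey := h i₀ hi₀ j₀ hj₀
  refine ⟨(f i₀ + g j₀) / 2, ?_, ?_⟩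
  · intro i hi; have := hmax i hi; linarith
  · intro j hj; have := hmin j hj; linarith

/-- Propagation of being "to the left of j" along a walk in `G.induce s`,
when `j` is not reachable from the start of the walk. -/
private lemma side_left {V : Type*} {G : SimpleGraph V} {a b c d : V → ℝ}
    (hrep : IsTrapRep G a b c d) {s : Set V} (j : s) :
    ∀ {u i : s}, (G.induce s).Walk u i → ¬ (G.induce s).Reachable u j →
      (b ↑u < a ↑j ∧ d ↑u < c ↑j) → (b ↑i < a ↑j ∧ d ↑i < c ↑j) := by
  intro u i p
  induction p with
  | nil => exact fun _ h => h
  | @cons u v i h q ih =>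
    intro hj hu
    have hGuv : G.Adj (u : V) (v : V) := h
    have hvj : v ≠ j := by rintro rfl; exact hj h.reachable
    have hne : (v : V) ≠ (j : V) := fun e => hvj (Subtype.ext e)
    have hGnadj : ¬ G.Adj (v : V) (j : V) := by
      intro hadj
      exact hj (h.reachable.trans (SimpleGraph.Adj.reachable (by exact hadj)))
    have hor : (b ↑v < a ↑j ∧ d ↑v < c ↑j) ∨ (b ↑j < a ↑v ∧ d ↑j < c ↑v) := by
      by_contra hcon
      exact hGnadj ((hrep.2.2.2.2 (v : V) (j : V) hne).mpr hcon)
    rcases hor with hvj' | hjv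
    · exact ih (fun hr => hj (h.reachable.trans hr)) hvj'
    · exfalso
      have habj := hrep.1 (j : V)
      have hcdj := hrep.2.1 (j : V)
      have hA := (hrep.2.2.2.2 (u : V) (v : V) hGuv.ne).mp hGuv
      exact hA (Or.inl ⟨by linarith [hu.1, hjv.1], by linarith [hu.2, hjv.2]⟩)

/-- Propagation of being "to the right of j" along a walk in `G.induce s`,
when `j` is not reachable from the start of the walk. -/
private lemma side_right {V : Type*} {G : SimpleGraph V} {a b c d : V → ℝ}
    (hrep : IsTrapRep G a b c d) {s : Set V} (j : s) :
    ∀ {u i : s}, (G.induce s).Walk u i → ¬ (G.induce s).Reachable u j →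
      (b ↑j < a ↑u ∧ d ↑j < c ↑u) → (b ↑j < a ↑i ∧ d ↑j < c ↑i) := by
  intro u i p
  induction p with
  | nil => exact fun _ h => h
  | @cons u v i h q ih =>
    intro hj hu
    have hGuv : G.Adj (u : V) (v : V) := h
    have hvj : v ≠ j := by rintro rfl; exact hj h.reachable
    have hne : (v : V) ≠ (j : V) := fun e => hvj (Subtype.ext e)
    have hGnadj : ¬ G.Adj (v : V) (j : V) := by
      intro hadj
      exact hj (h.reachable.trans (SimpleGraph.Adj.reachable (by exact hadj)))
    have hor : (b ↑v < a ↑j ∧ d ↑v < c ↑j) ∨ (b ↑j < a ↑v ∧ d ↑j < c ↑v) := by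
      by_contra hcon
      exact hGnadj ((hrep.2.2.2.2 (v : V) (j : V) hne).mpr hcon)
    rcases hor with hvj' | hjv
    · exfalso
      have habj := hrep.1 (j : V)
      have hcdj := hrep.2.1 (j : V)
      have hA := (hrep.2.2.2.2 (u : V) (v : V) hGuv.ne).mp hGuv
      exact hA (Or.inr ⟨by linarith [hu.1, hvj'.1], by linarith [hu.2, hvj'.2]⟩)
    · exact ih (fun hr => hj (h.reachable.trans hr)) hjv

/-- For a minimum vertex cut `S` of a connected non-complete trapezoid graph `G`,
there is a cut line `(x, y)` with at least one trapezoid entirely to its left,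
at least one entirely to its right, and every trapezoid crossing it belonging to `S`. -/
theorem min_vertex_cut_yields_cutLine {V : Type*} [Fintype V] (G : SimpleGraph V)
    (a b c d : V → ℝ) (hrep : IsTrapRep G a b c d)
    (hconn : G.Connected) (hnotcomplete : G ≠ ⊤)
    (S : Set V) (hcut : ¬ (G.induce Sᶜ).Connected)
    (hmin : ∀ S' : Set V, ¬ (G.induce S'ᶜ).Connected → S.ncard ≤ S'.ncard) :
    ∃ x y : ℝ,
      (∃ i, b i < x ∧ d i < y) ∧
      (∃ j, x < a j ∧ y < c j) ∧
      (∀ v : V, ¬(b v < x ∧ d v < y) → ¬(x < a v ∧ y < c v) → v ∈ S) := by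
  classical
  have hab := hrep.1
  have hcd := hrep.2.1
  have hiff := hrep.2.2.2.2
  by_cases hne : Sᶜ.Nonempty
  · -- Main case: `Sᶜ` is nonempty, so it is disconnected via non-preconnectedness.
    have hnpre : ¬ (G.induce Sᶜ).Preconnected := by
      intro hp
      have : Nonempty ↥Sᶜ := hne.to_subtype
      exact hcut ⟨hp⟩
    rw [SimpleGraph.Preconnected] at hnpre
    push_neg at hnpre
    obtain ⟨u, w, hw⟩ := hnpre
    set H := G.induce Sᶜ with hH
    -- every unreachable vertex is comparable with u
    have hclass : ∀ j : ↥Sᶜ, ¬ H.Reachable u j →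
        (b ↑u < a ↑j ∧ d ↑u < c ↑j) ∨ (b ↑j < a ↑u ∧ d ↑j < c ↑u) := by
      intro j hj
      have hnadj : ¬ G.Adj (u : V) (j : V) := by
        intro hadj
        exact hj (SimpleGraph.Adj.reachable (show H.Adj u j from hadj))
      have hne' : (u : V) ≠ (j : V) := by
        intro e
        exact hj (by rw [show u = j from Subtype.ext e])
      by_contra hcon
      exact hnadj ((hiff (u : V) (j : V) hne').mpr hcon)
    by_cases hBp : ∃ j : ↥Sᶜ, ¬ H.Reachable u j ∧ (b ↑u < a ↑j ∧ d ↑u < c ↑j)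
    · -- there is an unreachable vertex to the right of u
      obtain ⟨j₀, hj₀r, hj₀⟩ := hBp
      set L : Set V := {v : V | ∃ h : v ∈ Sᶜ, H.Reachable u ⟨v, h⟩ ∨
        (b v < a ↑u ∧ d v < c ↑u)} with hLdef
      set R : Set V := {v : V | ∃ h : v ∈ Sᶜ, ¬ H.Reachable u ⟨v, h⟩ ∧
        (b ↑u < a v ∧ d ↑u < c v)} with hRdef
      have hLne : L.Nonempty := ⟨↑u, u.2, Or.inl (by rw [Subtype.coe_eta])⟩
      have hRne : R.Nonempty := ⟨↑j₀, j₀.2, by rw [Subtype.coe_eta]; exact ⟨hj₀r, hj₀⟩⟩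
      have hsep : ∀ i ∈ L, ∀ j ∈ R, (b i < a j ∧ d i < c j) := by
        rintro i ⟨hiS, hi⟩ j ⟨hjS, hjr, hj⟩
        rcases hi with hreach | hprec
        · exact hreach.elim fun p => side_left hrep ⟨j, hjS⟩ p hjr hj
        · exact ⟨by linarith [hab (u : V), hprec.1, hj.1],
            by linarith [hcd (u : V), hprec.2, hj.2]⟩
      obtain ⟨x, hxL, hxR⟩ := exists_sep (Set.toFinite L) (Set.toFinite R) hLne hRne
        (fun i hi j hj => (hsep i hi j hj).1)
      obtain ⟨y, hyL, hyR⟩ := exists_sep (Set.toFinite L) (Set.toFinite R) hLne hRne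
        (fun i hi j hj => (hsep i hi j hj).2)
      obtain ⟨i₁, hi₁⟩ := hLne
      obtain ⟨j₁, hj₁⟩ := hRne
      refine ⟨x, y, ⟨i₁, hxL i₁ hi₁, hyL i₁ hi₁⟩, ⟨j₁, hxR j₁ hj₁, hyR j₁ hj₁⟩, ?_⟩
      intro v h1 h2
      by_contra hvS
      have hvSc : v ∈ Sᶜ := hvS
      by_cases hre : H.Reachable u ⟨v, hvSc⟩
      · exact h1 ⟨hxL v ⟨hvSc, Or.inl hre⟩, hyL v ⟨hvSc, Or.inl hre⟩⟩
      · rcases hclass ⟨v, hvSc⟩ hre with hp | hp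
        · exact h2 ⟨hxR v ⟨hvSc, hre, hp⟩, hyR v ⟨hvSc, hre, hp⟩⟩
        · exact h1 ⟨hxL v ⟨hvSc, Or.inr hp⟩, hyL v ⟨hvSc, Or.inr hp⟩⟩
    · -- every unreachable vertex is to the left of u
      push_neg at hBp
      have hleft : ∀ j : ↥Sᶜ, ¬ H.Reachable u j → (b ↑j < a ↑u ∧ d ↑j < c ↑u) := by
        intro j hj
        rcases hclass j hj with hp | hp
        · exact absurd (hBp j hj hp.1) (not_le.mpr hp.2)
        · exact hp
      set L : Set V := {v : V | ∃ h : v ∈ Sᶜ, ¬ H.Reachable u ⟨v, h⟩} with hLdef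
      set R : Set V := {v : V | ∃ h : v ∈ Sᶜ, H.Reachable u ⟨v, h⟩} with hRdef
      have hLne : L.Nonempty := ⟨↑w, w.2, by rw [Subtype.coe_eta]; exact hw⟩
      have hRne : R.Nonempty := ⟨↑u, u.2, by rw [Subtype.coe_eta]⟩
      have hsep : ∀ i ∈ L, ∀ j ∈ R, (b i < a j ∧ d i < c j) := by
        rintro i ⟨hiS, hi⟩ j ⟨hjS, hj⟩
        have hpi := hleft ⟨i, hiS⟩ hi
        exact hj.elim fun p => side_right hrep ⟨i, hiS⟩ p hi hpi
      obtain ⟨x, hxL, hxR⟩ := exists_sep (Set.toFinite L) (Set.toFinite R) hLne hRne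
        (fun i hi j hj => (hsep i hi j hj).1)
      obtain ⟨y, hyL, hyR⟩ := exists_sep (Set.toFinite L) (Set.toFinite R) hLne hRne
        (fun i hi j hj => (hsep i hi j hj).2)
      obtain ⟨i₁, hi₁⟩ := hLne
      obtain ⟨j₁, hj₁⟩ := hRne
      refine ⟨x, y, ⟨i₁, hxL i₁ hi₁, hyL i₁ hi₁⟩, ⟨j₁, hxR j₁ hj₁, hyR j₁ hj₁⟩, ?_⟩
      intro v h1 h2
      by_contra hvS
      have hvSc : v ∈ Sᶜ := hvS
      by_cases hre : H.Reachable u ⟨v, hvSc⟩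
      · exact h2 ⟨hxR v ⟨hvSc, hre⟩, hyR v ⟨hvSc, hre⟩⟩
      · exact h1 ⟨hxL v ⟨hvSc, hre⟩, hyL v ⟨hvSc, hre⟩⟩
  · -- Degenerate case: `Sᶜ = ∅`, so everything is in `S`; use non-completeness.
    have hS : ∀ v, v ∈ S := by
      intro v; by_contra hv; exact hne ⟨v, hv⟩
    have hpair : ∃ p q : V, p ≠ q ∧ ¬ G.Adj p q := by
      by_contra hc
      push_neg at hc
      apply hnotcomplete
      ext p q
      simp only [SimpleGraph.top_adj]
      exact ⟨fun h => h.ne, fun h => hc p q h⟩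
    obtain ⟨p, q, hpq, hnadj⟩ := hpair
    have hor : (b p < a q ∧ d p < c q) ∨ (b q < a p ∧ d q < c p) := by
      by_contra hcon
      exact hnadj ((hiff p q hpq).mpr hcon)
    rcases hor with ⟨h1, h2⟩ | ⟨h1, h2⟩
    · exact ⟨(b p + a q) / 2, (d p + c q) / 2,
        ⟨p, by linarith, by linarith⟩, ⟨q, by linarith, by linarith⟩,
        fun v _ _ => hS v⟩
    · exact ⟨(b q + a p) / 2, (d q + c p) / 2,
        ⟨q, by linarith, by linarith⟩, ⟨p, by linarith, by linarith⟩,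
        fun v _ _ => hS v⟩
end

section
/- Let G be a finite simple graph admitting a trapezoid representation. Then G is bipartite (2-colorable) if and only if G contains no triangle, i.e., G is 3-clique-free. -/
section WidthTwo

variable {α β : Type*} [LinearOrder β] {r : α → α → Prop} [IsTrans α r] {t : α → β}

theorem exists_color_below_incomparable (ht : ∀ ⦃x y⦄, r x y → t x < t y) {s : Finset α} {m : α}
    (hinc : IsChain r {y | y ∈ s ∧ ¬ r y m}) {f : α → Bool}
    (hf : ∀ c, IsChain r {x | x ∈ s ∧ f x = c}) :
    ∃ c, ∀ x ∈ s, f x = c → r x m → ∀ y ∈ s, ¬ r y m → r x y := by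
  classical
  rcases (s.filter (¬ r · m)).eq_empty_or_nonempty with hI | hI
  · rw [Finset.filter_eq_empty_iff] at hI
    exact ⟨true, fun _ _ _ _ y hy hym => absurd hym (hI hy)⟩
  obtain ⟨u, hu, humin⟩ := (s.filter (¬ r · m)).exists_min_image t hI
  rw [Finset.mem_filter] at hu
  refine ⟨f u, fun x hx hfx hxm y hy hym => ?_⟩
  have hxu : x ≠ u := by rintro rfl; exact hu.2 hxm
  have hru : r x u :=
    (hf (f u) ⟨hx, hfx⟩ ⟨hu.1, rfl⟩ hxu).resolve_right fun hux => hu.2 (_root_.trans hux hxm)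
  rcases eq_or_ne u y with rfl | huy
  · exact hru
  refine _root_.trans hru ((hinc ⟨hu.1, hu.2⟩ ⟨hy, hym⟩ huy).resolve_right fun hyu => ?_)
  exact (ht hyu).not_ge (humin y (Finset.mem_filter.2 ⟨hy, hym⟩))

theorem exists_two_chain_cover_insert [DecidableEq α] (ht : ∀ ⦃x y⦄, r x y → t x < t y)
    {s : Finset α} {m : α} (hinc : IsChain r {y | y ∈ s ∧ ¬ r y m})
    {f : α → Bool} (hf : ∀ c, IsChain r {x | x ∈ s ∧ f x = c}) :
    ∃ g : α → Bool, ∀ c, IsChain r {x | x ∈ insert m s ∧ g x = c} := by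
  classical
  obtain ⟨c, hc⟩ := exists_color_below_incomparable ht hinc hf
  set g : α → Bool := fun x => if x = m then !c else if r x m then f x else c
  have hgm : g m = !c := if_pos rfl
  have hg : ∀ x ∈ s, x ≠ m → g x = if r x m then f x else c := fun x _ hxm => if_neg hxm
  have hlow : ∀ c, IsChain r {x | x ∈ s ∧ f x = c ∧ r x m} :=
    fun c => (hf c).mono <| Set.ofPred_subset_ofPred.2 fun _ hx => ⟨hx.1, hx.2.1⟩
  refine ⟨g, fun c' => ?_⟩
  rcases Bool.eq_or_eq_not c' c with rfl | rfl
  · have hsub : {x | x ∈ insert m s ∧ g x = c'} ⊆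
        {x | x ∈ s ∧ f x = c' ∧ r x m} ∪ {y | y ∈ s ∧ ¬ r y m} := by
      rintro x ⟨hx, hgx⟩
      rcases eq_or_ne x m with rfl | hxm
      · simp [hgm] at hgx
      have hx : x ∈ s := (Finset.mem_insert.1 hx).resolve_left hxm
      rw [hg x hx hxm] at hgx
      by_cases hxm' : r x m
      · exact Or.inl ⟨hx, by simpa [hxm'] using hgx, hxm'⟩
      · exact Or.inr ⟨hx, hxm'⟩
    refine (isChain_union.2 ⟨hlow c', hinc, ?_⟩).mono hsub
    rintro x ⟨hx, hfx, hxm⟩ y ⟨hy, hym⟩ -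
    exact Or.inl (hc x hx hfx hxm y hy hym)
  · have hsub : {x | x ∈ insert m s ∧ g x = !c} ⊆ insert m {x | x ∈ s ∧ f x = !c ∧ r x m} := by
      rintro x ⟨hx, hgx⟩
      rcases eq_or_ne x m with rfl | hxm
      · exact Set.mem_insert x _
      have hx : x ∈ s := (Finset.mem_insert.1 hx).resolve_left hxm
      rw [hg x hx hxm] at hgx
      by_cases hxm' : r x m
      · exact Or.inr ⟨hx, by simpa [hxm'] using hgx, hxm'⟩
      · simp [hxm'] at hgx
    refine ((hlow (!c)).insert ?_).mono hsub
    exact fun y hy _ => Or.inr hy.2.2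

theorem exists_two_chain_cover (ht : ∀ ⦃x y⦄, r x y → t x < t y) (s : Finset α)
    (hs : ∀ x ∈ s, IsChain r {y | y ∈ s ∧ y ≠ x ∧ ¬ r x y ∧ ¬ r y x}) :
    ∃ f : α → Bool, ∀ c, IsChain r {x | x ∈ s ∧ f x = c} := by
  classical
  induction s using Finset.induction_on_max_value t with
  | empty => exact ⟨fun _ => true, fun _ _ hx => (Finset.notMem_empty _ hx.1).elim⟩
  | insert m s hms hm ih =>
    obtain ⟨f, hf⟩ := ih fun x hx => (hs x (Finset.mem_insert_of_mem hx)).mono <|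
      Set.ofPred_subset_ofPred.2 fun _ hy => ⟨Finset.mem_insert_of_mem hy.1, hy.2⟩
    refine exists_two_chain_cover_insert ht ((hs m (Finset.mem_insert_self m s)).mono ?_) hf
    rintro y ⟨hy, hym⟩
    exact ⟨Finset.mem_insert_of_mem hy, fun h => hms (h ▸ hy),
      fun hmy => (ht hmy).not_ge (hm y hy), hym⟩

end WidthTwo

namespace SimpleGraph

variable {V : Type*} {G : SimpleGraph V}

theorem nonempty_coloring_of_forall_finset {α : Type*} [Finite α]
    (h : ∀ s : Finset V, ∃ f : V → α, ∀ x ∈ s, ∀ y ∈ s, G.Adj x y → f x ≠ f y) :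
    Nonempty (G.Coloring α) := by
  classical
  choose g hg using h
  obtain ⟨χ, hχ⟩ := Finset.rado_selection g
  refine ⟨Coloring.mk χ fun {x y} hxy => ?_⟩
  obtain ⟨s, hs, hχs⟩ := hχ {x, y}
  rw [hχs x (by simp), hχs y (by simp)]
  exact hg s x (hs (by simp)) y (hs (by simp)) hxy

theorem CliqueFree.colorable_two_of_adj_iff_incomparable {β : Type*} [LinearOrder β]
    {r : V → V → Prop} [IsTrans V r] {t : V → β} (h3 : G.CliqueFree 3)
    (ht : ∀ ⦃x y⦄, r x y → t x < t y) (hadj : ∀ x y, x ≠ y → (G.Adj x y ↔ ¬ r x y ∧ ¬ r y x)) :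
    G.Colorable 2 := by
  have hwidth (s : Finset V) (x : V) : IsChain r {y | y ∈ s ∧ y ≠ x ∧ ¬ r x y ∧ ¬ r y x} := by
    classical
    rintro y ⟨-, hyx, hxy, hyx'⟩ z ⟨-, hzx, hxz, hzx'⟩ hyz
    by_contra hinc
    refine h3 {x, y, z} (is3Clique_triple_iff.2 ⟨?_, ?_, ?_⟩)
    · exact (hadj x y hyx.symm).2 ⟨hxy, hyx'⟩
    · exact (hadj x z hzx.symm).2 ⟨hxz, hzx'⟩
    · exact (hadj y z hyz).2 (not_or.1 hinc)
  obtain ⟨C⟩ := nonempty_coloring_of_forall_finset (G := G) (α := Bool) fun s => by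
    obtain ⟨f, hf⟩ := exists_two_chain_cover ht s fun x _ => hwidth s x
    exact ⟨f, fun x hx y hy hxy hfxy =>
      not_or.2 ((hadj x y hxy.ne).1 hxy) (hf (f y) ⟨hx, hfxy⟩ ⟨hy, rfl⟩ hxy.ne)⟩
  simpa using C.colorable

end SimpleGraph

theorem trapezoid_bipartite_iff_triangleFree_general {V : Type*} (G : SimpleGraph V)
    (hrep : ∃ a b c d : V → ℝ, IsTrapRep G a b c d) :
    G.Colorable 2 ↔ G.CliqueFree 3 := by
  refine ⟨fun h2 => h2.cliqueFree (by norm_num), fun h3 => ?_⟩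
  obtain ⟨a, b, c, d, hab, hcd, -, -, hadj⟩ := hrep
  have : IsTrans V fun i j => b i < a j ∧ d i < c j :=
    ⟨fun i j k hij hjk =>
      ⟨hij.1.trans_le ((hab j).trans hjk.1.le), hij.2.trans_le ((hcd j).trans hjk.2.le)⟩⟩
  exact h3.colorable_two_of_adj_iff_incomparable (t := b) (fun i j hij => hij.1.trans_le (hab j))
    fun i j hij => (hadj i j hij).trans not_or

/-- A trapezoid graph is bipartite if and only if it contains no triangle. -/
theorem trapezoid_bipartite_iff_triangleFree {V : Type*} [Fintype V] (G : SimpleGraph V)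
    (hrep : ∃ a b c d : V → ℝ, IsTrapRep G a b c d) :
    G.Colorable 2 ↔ G.CliqueFree 3 :=
  trapezoid_bipartite_iff_triangleFree_general G hrep
end

section
/- Let G be a finite simple graph admitting a trapezoid representation. Then every cycle in G of length greater than four contains a chord: if v₀, v₁, …, v_{k-1}, v₀ is a cycle of G with k ≥ 5 distinct vertices, then there exist two vertices v_i and v_j that are not consecutive on the cycle (i.e., |i − j| ≢ 1 (mod k)) but are adjacent in G. -/
open Function Relation

theorem ZMod.natCast_ne_zero_of_pos_of_lt {k n : ℕ} (h0 : 0 < n) (hn : n < k) :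
    (n : ZMod k) ≠ 0 := by
  rw [Ne, ZMod.natCast_eq_zero_iff]
  exact fun h => (Nat.le_of_dvd h0 h).not_gt hn

theorem ZMod.forall_of_zero_of_succ {k : ℕ} [NeZero k] {P : ZMod k → Prop} (h0 : P 0)
    (hsucc : ∀ i, P i → P (i + 1)) (i : ZMod k) : P i := by
  obtain ⟨n, rfl⟩ := ZMod.natCast_zmod_surjective i
  induction n with
  | zero => simpa using h0
  | succ n ih => simpa using hsucc _ ih

section StrictOrder

variable {α : Type*} {r : α → α → Prop} {k : ℕ} {v : ZMod k → α}

theorem symmGen_of_two_le_of_add_two_le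
    (hcomp : ∀ i j, i ≠ j → i ≠ j + 1 → j ≠ i + 1 → SymmGen r (v i) (v j))
    (i : ZMod k) {m : ℕ} (hm : 2 ≤ m) (hmk : m + 2 ≤ k) : SymmGen r (v i) (v (i + m)) := by
  refine hcomp i (i + m) ?_ ?_ ?_
  · exact fun h => ZMod.natCast_ne_zero_of_pos_of_lt (k := k) (n := m) (by omega) (by omega)
      (by linear_combination -h)
  · exact fun h => ZMod.natCast_ne_zero_of_pos_of_lt (k := k) (n := m + 1) (by omega) (by omega)
      (by push_cast; linear_combination -h)
  · exact fun h => ZMod.natCast_ne_zero_of_pos_of_lt (k := k) (n := m - 1) (by omega) (by omega)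
      (by push_cast [Nat.cast_sub (by omega : 1 ≤ m)]; linear_combination h)

variable [IsStrictOrder α r]

theorem not_forall_rel_apply_add [NeZero k] (f : ZMod k → α) (s : ZMod k) :
    ¬ ∀ i, r (f i) (f (i + s)) := by
  intro h
  have chain : ∀ n : ℕ, 0 < n → r (f 0) (f (n * s)) := by
    intro n hn
    induction n, hn using Nat.le_induction with
    | base => simpa using h 0
    | succ n _ ih => simpa [add_mul] using _root_.trans ih (h (n * s))
  exact irrefl _ (by simpa using chain k (NeZero.pos k))

theorem rel_add_one_add_two_of_rel_add_two (hk : 5 ≤ k)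
    (hcons : ∀ i, IncompRel r (v i) (v (i + 1)))
    (hcomp : ∀ i j, i ≠ j → i ≠ j + 1 → j ≠ i + 1 → SymmGen r (v i) (v j))
    {i : ZMod k} (h : r (v i) (v (i + 2))) : r (v (i + 1)) (v (i + 1 + 2)) := by
  have h03 : r (v i) (v (i + 3)) := by
    have hc : SymmGen r (v i) (v (i + 3)) := by
      exact_mod_cast symmGen_of_two_le_of_add_two_le hcomp i (m := 3) le_add_self (by omega)
    refine hc.resolve_right fun h30 => (hcons (i + 2)).2 ?_
    rw [show i + 2 + 1 = i + 3 by ring]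
    exact _root_.trans h30 h
  have hc : SymmGen r (v (i + 1)) (v (i + 1 + 2)) := by
    exact_mod_cast symmGen_of_two_le_of_add_two_le hcomp (i + 1) (m := 2) le_rfl (by omega)
  refine hc.resolve_right fun h31 => (hcons i).1 (_root_.trans h03 ?_)
  rwa [show i + 1 + 2 = i + 3 by ring] at h31

theorem false_of_rel_zero_two (hk : 5 ≤ k)
    (hcons : ∀ i, IncompRel r (v i) (v (i + 1)))
    (hcomp : ∀ i j, i ≠ j → i ≠ j + 1 → j ≠ i + 1 → SymmGen r (v i) (v j))
    (h : r (v 0) (v 2)) : False :=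
  haveI : NeZero k := ⟨by omega⟩
  not_forall_rel_apply_add v 2 <| ZMod.forall_of_zero_of_succ (P := fun i => r (v i) (v (i + 2)))
    (by simpa using h) fun _ => rel_add_one_add_two_of_rel_add_two hk hcons hcomp

theorem exists_incompRel_chord (hk : 5 ≤ k) (hcons : ∀ i, IncompRel r (v i) (v (i + 1))) :
    ∃ i j, i ≠ j ∧ i ≠ j + 1 ∧ j ≠ i + 1 ∧ IncompRel r (v i) (v j) := by
  by_contra! hchord
  have hcomp : ∀ i j, i ≠ j → i ≠ j + 1 → j ≠ i + 1 → SymmGen r (v i) (v j) :=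
    fun i j hij hij1 hji1 => not_incompRel_iff_symmGen.1 (hchord i j hij hij1 hji1)
  rcases symmGen_of_two_le_of_add_two_le hcomp 0 (m := 2) le_rfl (by omega) with h | h
  · exact false_of_rel_zero_two hk hcons hcomp (by simpa using h)
  · exact false_of_rel_zero_two (r := swap r) hk (fun i => (incompRel_swap_apply r).2 (hcons i))
      (fun i j hij hij1 hji1 => (symmGen_swap_apply r).2 (hcomp i j hij hij1 hji1))
      (by simpa using h)

end StrictOrder

section Trapezoid

variable {V : Type*} {G : SimpleGraph V} {a b c d : V → ℝ}

def trapezoidLeftOf (a b c d : V → ℝ) (i j : V) : Prop :=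
  b i < a j ∧ d i < c j

theorem isStrictOrder_trapezoidLeftOf (hab : ∀ i, a i ≤ b i) (hcd : ∀ i, c i ≤ d i) :
    IsStrictOrder V (trapezoidLeftOf a b c d) where
  irrefl i h := (hab i).not_gt h.1
  trans _ j _ hij hjl :=
    ⟨(hij.1.trans_le (hab j)).trans hjl.1, (hij.2.trans_le (hcd j)).trans hjl.2⟩

theorem IsTrapRep.adj_iff_incompRel (h : IsTrapRep G a b c d) {i j : V} (hij : i ≠ j) :
    G.Adj i j ↔ IncompRel (trapezoidLeftOf a b c d) i j :=
  (h.2.2.2.2 i j hij).trans (not_symmGen_iff (r := trapezoidLeftOf a b c d))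

end Trapezoid

theorem trapezoid_long_cycle_has_chord_general {V : Type*} (G : SimpleGraph V)
    (hrep : ∃ a b c d : V → ℝ, IsTrapRep G a b c d)
    (k : ℕ) (hk : 5 ≤ k) (v : ZMod k → V)
    (hinj : Function.Injective v)
    (hcyc : ∀ i : ZMod k, G.Adj (v i) (v (i + 1))) :
    ∃ i j : ZMod k, G.Adj (v i) (v j) ∧ i ≠ j + 1 ∧ j ≠ i + 1 := by
  obtain ⟨a, b, c, d, hrep⟩ := hrep
  have := isStrictOrder_trapezoidLeftOf hrep.1 hrep.2.1
  obtain ⟨i, j, hij, hij1, hji1, hincomp⟩ :=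
    exists_incompRel_chord (r := trapezoidLeftOf a b c d) hk fun i =>
      (hrep.adj_iff_incompRel (hcyc i).ne).1 (hcyc i)
  exact ⟨i, j, (hrep.adj_iff_incompRel (hinj.ne hij)).2 hincomp, hij1, hji1⟩

/-- In a trapezoid graph, every cycle of length greater than four contains a chord:
two vertices of the cycle that are not consecutive on it but are adjacent in `G`. -/
theorem trapezoid_long_cycle_has_chord {V : Type*} [Fintype V] (G : SimpleGraph V)
    (hrep : ∃ a b c d : V → ℝ, IsTrapRep G a b c d)
    (k : ℕ) (hk : 5 ≤ k) (v : ZMod k → V)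
    (hinj : Function.Injective v)
    (hcyc : ∀ i : ZMod k, G.Adj (v i) (v (i + 1))) :
    ∃ i j : ZMod k, G.Adj (v i) (v j) ∧ i ≠ j + 1 ∧ j ≠ i + 1 :=
  trapezoid_long_cycle_has_chord_general G hrep k hk v hinj hcyc
end

section
/- Let G be a finite tree (a connected acyclic simple graph) containing a vertex w with three distinct neighbors v₁, v₂, v₃ such that each v_k (k = 1, 2, 3) has a neighbor different from w (equivalently, each v_k has degree at least 2). Then G admits no trapezoid representation. -/
private lemma no_shortcut {V : Type*} {G : SimpleGraph V} (hG : G.IsAcyclic)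
    {x y : V} (p : G.Walk x y) (hp : p.IsPath) (hlen : 1 < p.length) :
    ¬ G.Adj x y := by
  intro h
  have heq := hG.path_unique ⟨p, hp⟩
      ⟨SimpleGraph.Walk.cons h SimpleGraph.Walk.nil, by simp [h.ne]⟩
  have hl : p.length = 1 := by
    have := congrArg (fun q : G.Path x y => q.1.length) heq
    simpa using this
  omega

private lemma core {α : Type*} {P : α → α → Prop}
    (htrans : ∀ {i j k : α}, P i j → P j k → P i k)
    {vi vk vj w u : α}
    (h1 : P vi vk) (h2 : P vk vj)
    (hwj : ¬ P w vj) (hiw : ¬ P vi w)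
    (hku : ¬ P vk u) (huk : ¬ P u vk)
    (tuw : P u w ∨ P w u) (tui : P u vi ∨ P vi u) (tuj : P u vj ∨ P vj u) :
    False := by
  rcases tuw with hu | hw
  · rcases tui with h | h
    · exact huk (htrans h h1)
    · exact hiw (htrans h hu)
  · rcases tuj with h | h
    · exact hwj (htrans hw h)
    · exact hku (htrans h2 h)

/-- A finite tree containing a vertex `w` with three distinct neighbors, each of which has
a neighbor different from `w`, admits no trapezoid representation. -/
theorem non_caterpillar_tree_has_no_trapRep {V : Type*} [Fintype V] (G : SimpleGraph V)
    (htree : G.IsTree)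
    (w v₁ v₂ v₃ : V)
    (hne₁₂ : v₁ ≠ v₂) (hne₁₃ : v₁ ≠ v₃) (hne₂₃ : v₂ ≠ v₃)
    (hadj₁ : G.Adj w v₁) (hadj₂ : G.Adj w v₂) (hadj₃ : G.Adj w v₃)
    (hu₁ : ∃ u, u ≠ w ∧ G.Adj v₁ u)
    (hu₂ : ∃ u, u ≠ w ∧ G.Adj v₂ u)
    (hu₃ : ∃ u, u ≠ w ∧ G.Adj v₃ u) :
    ¬ ∃ a b c d : V → ℝ, IsTrapRep G a b c d := by
  rintro ⟨a, b, c, d, hab, hcd, -, -, hiff⟩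
  obtain ⟨u₁, hu₁w, hu₁a⟩ := hu₁
  obtain ⟨u₂, hu₂w, hu₂a⟩ := hu₂
  obtain ⟨u₃, hu₃w, hu₃a⟩ := hu₃
  have hac : G.IsAcyclic := htree.IsAcyclic
  -- non-adjacency of the vᵢ's
  have hnav : ∀ {x y : V}, G.Adj w x → G.Adj w y → x ≠ y → ¬ G.Adj x y := by
    intro x y hx hy hxy
    exact no_shortcut hac (SimpleGraph.Walk.cons hx.symm (SimpleGraph.Walk.cons hy .nil))
      (by simp [SimpleGraph.Walk.isPath_def, hx.ne', hy.ne, hxy]) (by simp)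
  have hnav₁₂ : ¬ G.Adj v₁ v₂ := hnav hadj₁ hadj₂ hne₁₂
  have hnav₁₃ : ¬ G.Adj v₁ v₃ := hnav hadj₁ hadj₃ hne₁₃
  have hnav₂₃ : ¬ G.Adj v₂ v₃ := hnav hadj₂ hadj₃ hne₂₃
  -- distinctness of uₖ from the other vⱼ's
  have hnevu : ∀ {x y ux : V}, G.Adj w x → G.Adj w y → x ≠ y → G.Adj x ux → ux ≠ y := by
    intro x y ux hx hy hxy hxu h
    exact hnav hx hy hxy (h ▸ hxu)
  -- uₖ not adjacent to w
  have hnauw : ∀ {x ux : V}, G.Adj w x → ux ≠ w → G.Adj x ux → ¬ G.Adj ux w := by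
    intro x ux hx huw hxu
    have : ¬ G.Adj w ux :=
      no_shortcut hac (SimpleGraph.Walk.cons hx (SimpleGraph.Walk.cons hxu .nil))
        (by simp [SimpleGraph.Walk.isPath_def, hx.ne, hxu.ne, Ne.symm huw]) (by simp)
    exact fun h => this h.symm
  -- uₖ not adjacent to vⱼ for j ≠ k
  have hnauv : ∀ {x y ux : V}, G.Adj w x → G.Adj w y → x ≠ y → ux ≠ w → G.Adj x ux →
      ¬ G.Adj ux y := by
    intro x y ux hx hy hxy huw hxu
    have hxuy : ux ≠ y := hnevu hx hy hxy hxu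
    have : ¬ G.Adj y ux :=
      no_shortcut hac
        (SimpleGraph.Walk.cons hy.symm (SimpleGraph.Walk.cons hx (SimpleGraph.Walk.cons hxu .nil)))
        (by simp [SimpleGraph.Walk.isPath_def, hx.ne, hy.ne, hy.ne', hxu.ne, Ne.symm huw,
          Ne.symm hxy, Ne.symm hxuy]) (by simp)
    exact fun h => this h.symm
  -- the trapezoid order
  set P : V → V → Prop := fun i j => b i < a j ∧ d i < c j with hP
  have htrans : ∀ {i j k : V}, P i j → P j k → P i k := by
    intro i j k h1 h2
    refine ⟨lt_of_lt_of_le h1.1 (le_of_lt (lt_of_le_of_lt (hab j) h2.1)), ?_⟩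
    exact lt_of_lt_of_le h1.2 (le_of_lt (lt_of_le_of_lt (hcd j) h2.2))
  have hanti : ∀ {i j : V}, P i j → P j i → False := by
    intro i j h1 h2
    have := hab i; have := hab j
    have h1 := h1.1; have h2 := h2.1
    linarith
  have nP : ∀ {i j : V}, G.Adj i j → ¬ P i j := by
    intro i j h hp
    exact ((hiff i j h.ne).mp h) (Or.inl hp)
  have comp : ∀ {i j : V}, i ≠ j → ¬ G.Adj i j → P i j ∨ P j i := by
    intro i j hne hna
    by_contra h
    exact hna ((hiff i j hne).mpr h)
  -- comparabilities involving each uₖ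
  have key : ∀ (vi vk vj uk : V), P vi vk → P vk vj → G.Adj w vi → G.Adj w vk → G.Adj w vj →
      vi ≠ vk → vk ≠ vj → vi ≠ vj → uk ≠ w → G.Adj vk uk → False := by
    intro vi vk vj uk h1 h2 hwi hwk hwj hik hkj hij hukw hku
    refine core (P := P) (vi := vi) (vk := vk) (vj := vj) (w := w) (u := uk) htrans h1 h2 (nP hwj) (nP hwi.symm) (nP hku) (nP hku.symm) ?_ ?_ ?_
    · exact comp hukw (fun h => hnauw hwk hukw hku h)
    · exact comp (hnevu hwk hwi hik.symm hku) (hnauv hwk hwi hik.symm hukw hku)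
    · exact comp (hnevu hwk hwj hkj hku) (hnauv hwk hwj hkj hukw hku)
  rcases comp hne₁₂ hnav₁₂ with hA | hA <;>
    rcases comp hne₂₃ hnav₂₃ with hB | hB <;>
    rcases comp hne₁₃ hnav₁₃ with hC | hC
  · exact key v₁ v₂ v₃ u₂ hA hB hadj₁ hadj₂ hadj₃ hne₁₂ hne₂₃ hne₁₃ hu₂w hu₂a
  · exact hanti (htrans hA hB) hC
  · exact key v₁ v₃ v₂ u₃ hC hB hadj₁ hadj₃ hadj₂ hne₁₃ (Ne.symm hne₂₃) hne₁₂ hu₃w hu₃a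
  · exact key v₃ v₁ v₂ u₁ hC hA hadj₃ hadj₁ hadj₂ (Ne.symm hne₁₃) hne₁₂ (Ne.symm hne₂₃) hu₁w hu₁a
  · exact key v₂ v₁ v₃ u₁ hA hC hadj₂ hadj₁ hadj₃ (Ne.symm hne₁₂) hne₁₃ hne₂₃ hu₁w hu₁a
  · exact key v₂ v₃ v₁ u₃ hB hC hadj₂ hadj₃ hadj₁ hne₂₃ (Ne.symm hne₁₃) (Ne.symm hne₁₂) hu₃w hu₃a
  · exact hanti hC (htrans hB hA)
  · exact key v₃ v₂ v₁ u₂ hB hA hadj₃ hadj₂ hadj₁ (Ne.symm hne₂₃) (Ne.symm hne₁₂) (Ne.symm hne₁₃) hu₂w hu₂a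
end
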